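/- Let Z be a set of positions in an m×n matrix containing the positions (1,1), …, (k−1,k−1), and suppose the cover γ consisting of columns 1, …, k−1 is a (k−1)-cover of Z. Then R(γ) is the unique maximal element of the poset Q_{k,Z}: for every (k−1)-cover α of Z, R(α) ≤ R(γ). Moreover, every chain in Q_{k,Z} not ending with R(γ) can be extended by appending R(γ) at the end. -/

import Mathlib

open MeasureTheory ProbabilityTheory Finset

namespace Kassign

variable {m n : ℕ}

/-- A `k`-assignment: `k` positions in an `m × n` matrix, no two sharing a row or a column. -/
def IsAssignment (k : ℕ) (A : Finset (Fin m × Fin n)) : Prop :=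
  A.card = k ∧ ∀ p ∈ A, ∀ q ∈ A, p ≠ q → p.1 ≠ q.1 ∧ p.2 ≠ q.2

/-- A cover: a set of rows together with a set of columns. -/
structure Cover (m n : ℕ) where
  rows : Finset (Fin m)
  cols : Finset (Fin n)
deriving DecidableEq

namespace Cover

/-- The size of a cover: the number of rows and columns in it. -/
def size (α : Cover m n) : ℕ := α.rows.card + α.cols.card

/-- `α` covers `Z` if every position of `Z` lies in a row or a column of `α`. -/
def Covers (α : Cover m n) (Z : Finset (Fin m × Fin n)) : Prop :=
  ∀ p ∈ Z, p.1 ∈ α.rows ∨ p.2 ∈ α.cols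

/-- The rectangle of a cover: the positions lying in no row or column of the cover. -/
def rect (α : Cover m n) : Finset (Fin m × Fin n) := α.rowsᶜ ×ˢ α.colsᶜ

/-- The partial order on critical rectangles (modelled by their covers):
`R(α) ≤ R(β)` iff `cols α ⊆ cols β` and `rows α ⊇ rows β`. -/
instance : PartialOrder (Cover m n) where
  le α β := α.cols ⊆ β.cols ∧ β.rows ⊆ α.rows
  le_refl _ := ⟨subset_rfl, subset_rfl⟩
  le_trans _ _ _ h h' := ⟨h.1.trans h'.1, h'.2.trans h.2⟩
  le_antisymm := by
    rintro ⟨r1, c1⟩ ⟨r2, c2⟩ h h'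
    obtain ⟨h1, h2⟩ := h
    obtain ⟨h1', h2'⟩ := h'
    simp only [Cover.mk.injEq]
    exact ⟨Finset.Subset.antisymm h2' h2, Finset.Subset.antisymm h1 h1'⟩

instance : Fintype (Cover m n) :=
  Fintype.ofEquiv (Finset (Fin m) × Finset (Fin n))
    { toFun := fun p => ⟨p.1, p.2⟩
      invFun := fun α => (α.rows, α.cols)
      left_inv := fun _ => rfl
      right_inv := fun _ => rfl }

instance : DecidableRel (α := Cover m n) (· ≤ ·) :=
  fun a b => decidable_of_iff (a.cols ⊆ b.cols ∧ b.rows ⊆ a.rows) Iff.rfl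

instance : DecidableRel (α := Cover m n) (· < ·) :=
  fun a b => decidable_of_iff (a ≤ b ∧ ¬ b ≤ a) lt_iff_le_not_ge.symm

instance (Z : Finset (Fin m × Fin n)) : DecidablePred (fun α : Cover m n => α.Covers Z) :=
  fun α => decidable_of_iff (∀ p ∈ Z, p.1 ∈ α.rows ∨ p.2 ∈ α.cols) Iff.rfl

end Cover

instance {s : ℕ} (c : Fin s → Cover m n) : Decidable (StrictMono c) :=
  decidable_of_iff (∀ a b : Fin s, a < b → c a < c b) Iff.rfl

/-- `Q_{k,Z}` (for `j = k - 1`): the poset of critical rectangles, modelled by the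
`j`-covers of `Z`. -/
def criticalCovers (j : ℕ) (Z : Finset (Fin m × Fin n)) : Finset (Cover m n) :=
  Finset.univ.filter fun α => α.Covers Z ∧ α.size = j

/-- The rate `I(R)` of a set of positions: the sum of the rates of its entries. -/
def rate (lam : Fin m × Fin n → ℝ) (R : Finset (Fin m × Fin n)) : ℝ := ∑ p ∈ R, lam p

/-- `Z` contains `j` zeros in independent position. -/
def HasIndepZeros (j : ℕ) (Z : Finset (Fin m × Fin n)) : Prop :=
  ∃ A ⊆ Z, IsAssignment j A

variable {Ω : Type*} [MeasurableSpace Ω]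

/-- `Y` is an exponential random variable with rate `l` under `P`:
`P(Y > t) = e^{-l t}` for all `t ≥ 0`. -/
def IsExponential (P : Measure Ω) (Y : Ω → ℝ) (l : ℝ) : Prop :=
  Measurable Y ∧ ∀ t : ℝ, 0 ≤ t → P {ω | t < Y ω} = ENNReal.ofReal (Real.exp (-(l * t)))

/-- The random matrix model: entries at positions of `Z` are identically `0`; the other
entries are mutually independent exponential random variables, the entry at `p` having
positive rate `lam p`. -/
def MatrixModel (P : Measure Ω) (Z : Finset (Fin m × Fin n))
    (lam : Fin m × Fin n → ℝ) (X : Fin m × Fin n → Ω → ℝ) : Prop :=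
  (∀ p ∈ Z, ∀ ω, X p ω = 0) ∧
  (∀ p ∉ Z, 0 < lam p ∧ IsExponential P (X p) (lam p)) ∧
  iIndepFun (fun p : {p : Fin m × Fin n // p ∉ Z} => X p.1) P

/-- `min_k(M)`: the value of an optimal `k`-assignment. -/
noncomputable def minAssign (k : ℕ) (X : Fin m × Fin n → Ω → ℝ) (ω : Ω) : ℝ :=
  sInf {v | ∃ A : Finset (Fin m × Fin n), IsAssignment k A ∧ v = ∑ p ∈ A, X p ω}

/-- `min_k(M^r)`: the value of an optimal `k`-assignment avoiding row `r`
(i.e. in the matrix with row `r` deleted). -/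
noncomputable def minAssignAvoid (k : ℕ) (r : Fin m) (X : Fin m × Fin n → Ω → ℝ) (ω : Ω) : ℝ :=
  sInf {v | ∃ A : Finset (Fin m × Fin n), IsAssignment k A ∧ (∀ p ∈ A, p.1 ≠ r) ∧
    v = ∑ p ∈ A, X p ω}

/-- The Laplace transform `L(Y, t) = E[e^{-tY}]`. -/
noncomputable def laplace (P : Measure Ω) (Y : Ω → ℝ) (t : ℝ) : ℝ :=
  ∫ ω, Real.exp (-t * Y ω) ∂P

/-- `φ(R, t) = I(R) / (I(R) + t)`, the Laplace transform of an exponential variable of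
rate `I(R)`. -/
noncomputable def phi (lam : Fin m × Fin n → ℝ) (R : Cover m n) (t : ℝ) : ℝ :=
  rate lam R.rect / (rate lam R.rect + t)

/-- `g` is the (two-sided) inverse of `f` in the incidence algebra of the poset `S`. -/
def IsIncidenceInverse {C : Type*} [PartialOrder C] [DecidableEq C]
    [DecidableRel (α := C) (· ≤ ·)] (S : Finset C) (f g : C → C → ℝ) : Prop :=
  (∀ a ∈ S, ∀ b ∈ S,
    (∑ c ∈ S.filter fun c => a ≤ c ∧ c ≤ b, f a c * g c b) = if a = b then 1 else 0) ∧
  (∀ a ∈ S, ∀ b ∈ S,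
    (∑ c ∈ S.filter fun c => a ≤ c ∧ c ≤ b, g a c * f c b) = if a = b then 1 else 0)

/-- The column cover `γ` consisting of the first `j` columns (and no rows). -/
def colCover (m n j : ℕ) : Cover m n :=
  ⟨∅, Finset.univ.filter fun c : Fin n => (c : ℕ) < j⟩

/-- `K_i`: the intersection of the rectangle of `α` with row `i`. -/
def rowPart (α : Cover m n) (i : Fin m) : Finset (Fin m × Fin n) :=
  α.rect.filter fun p => p.1 = i


/-- If `Z` contains the diagonal positions `(i,i)`, `i < k-1`, and the
cover `γ` of the first `k-1` columns covers `Z`, then `R(γ)` is the unique maximal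
element of `Q_{k,Z}`, and every chain in `Q_{k,Z}` not ending with `R(γ)` can be
extended by appending `R(γ)` at the end. -/
theorem colCover_is_maximum {m n k : ℕ}
    (Z : Finset (Fin m × Fin n)) (hk : 1 ≤ k) (hkm : k ≤ m) (hkn : k ≤ n)
    (hdiag : ∀ p : Fin m × Fin n, (p.1 : ℕ) = (p.2 : ℕ) → (p.1 : ℕ) < k - 1 → p ∈ Z)
    (hγ : (colCover m n (k - 1)).Covers Z) :
    colCover m n (k - 1) ∈ criticalCovers (k - 1) Z ∧
    (∀ α ∈ criticalCovers (k - 1) Z, α ≤ colCover m n (k - 1)) ∧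
    (∀ (s : ℕ) (c : Fin (s + 1) → Cover m n), StrictMono c →
      (∀ i, c i ∈ criticalCovers (k - 1) Z) → c (Fin.last s) ≠ colCover m n (k - 1) →
      ∃ c' : Fin (s + 2) → Cover m n, StrictMono c' ∧
        (∀ i, c' i ∈ criticalCovers (k - 1) Z) ∧
        (∀ i : Fin (s + 1), c' i.castSucc = c i) ∧
        c' (Fin.last (s + 1)) = colCover m n (k - 1)) := by

  have hj : k - 1 < n := lt_of_lt_of_le (Nat.sub_lt hk one_pos) hkn
  set γ := colCover m n (k - 1) with hγdef
  have hsize : γ.size = k - 1 := by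
    have : (Finset.univ.filter fun c : Fin n => (c : ℕ) < k - 1) = Finset.Iio ⟨k - 1, hj⟩ := by
      ext c; simp [Fin.lt_def]
    simp [hγdef, colCover, Cover.size, this, Fin.card_Iio]
  have hmem : γ ∈ criticalCovers (k - 1) Z := by
    simp [criticalCovers, hγ, hsize]
  have hmax : ∀ α ∈ criticalCovers (k - 1) Z, α ≤ γ := by
    intro α hα
    simp only [criticalCovers, Finset.mem_filter, Finset.mem_univ, true_and] at hα
    obtain ⟨hcov, hs⟩ := hα
    set S : Finset ℕ := α.rows.image Fin.val ∪ α.cols.image Fin.val with hSdef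
    have hScard : S.card ≤ k - 1 := by
      calc S.card ≤ (α.rows.image Fin.val).card + (α.cols.image Fin.val).card :=
            Finset.card_union_le _ _
        _ ≤ α.rows.card + α.cols.card := by
            gcongr <;> exact Finset.card_image_le
        _ = k - 1 := hs
    have hrange : Finset.range (k - 1) ⊆ S := by
      intro i hi
      rw [Finset.mem_range] at hi
      have him : i < m := lt_of_lt_of_le (lt_of_lt_of_le hi (Nat.sub_le k 1)) hkm
      have hin : i < n := lt_of_lt_of_le (lt_of_lt_of_le hi (Nat.sub_le k 1)) hkn
      have hz : ((⟨i, him⟩ : Fin m), (⟨i, hin⟩ : Fin n)) ∈ Z := hdiag _ rfl hi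
      rcases hcov _ hz with h | h
      · exact Finset.mem_union_left _ (Finset.mem_image_of_mem _ h)
      · exact Finset.mem_union_right _ (Finset.mem_image_of_mem _ h)
    have hSeq : S = Finset.range (k - 1) := by
      exact (Finset.eq_of_subset_of_card_le hrange (by simpa using hScard)).symm
    constructor
    · intro c hc
      have : (c : ℕ) ∈ S := Finset.mem_union_right _ (Finset.mem_image_of_mem _ hc)
      rw [hSeq, Finset.mem_range] at this
      simp [hγdef, colCover, this]
    · intro r hr
      simp [hγdef, colCover] at hr
  refine ⟨hmem, hmax, ?_⟩
  intro s c hc hmemc hne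
  refine ⟨Fin.snoc c γ, ?_, ?_, ?_, ?_⟩
  · intro a b hab
    have hlast : c (Fin.last s) < γ :=
      lt_of_le_of_ne (hmax _ (hmemc _)) hne
    rcases Fin.eq_castSucc_or_eq_last b with ⟨b', rfl⟩ | rfl
    · rcases Fin.eq_castSucc_or_eq_last a with ⟨a', rfl⟩ | rfl
      · simp only [Fin.snoc_castSucc]
        exact hc (by exact_mod_cast hab)
      · exact absurd hab (by
          simp only [Fin.lt_def, Fin.val_last, Fin.coe_castSucc, not_lt]
          omega)
    · rcases Fin.eq_castSucc_or_eq_last a with ⟨a', rfl⟩ | rfl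
      · simp only [Fin.snoc_castSucc, Fin.snoc_last]
        exact lt_of_le_of_lt (hc.monotone (Fin.le_last a')) hlast
      · exact absurd hab (lt_irrefl _)
  · intro i
    rcases Fin.eq_castSucc_or_eq_last i with ⟨i', rfl⟩ | rfl
    · simpa using hmemc i'
    · simpa using hmem
  · intro i; simp
  · simp


end Kassign
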